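/- Let α be a complex number with Re(α) > −1/2, let u_0^{(α)} : ℂ[x] → ℂ be the linear functional with u_0^{(α)}(P_k(·;α)) = δ_{0,k} for all k, and let u_0^{(α+1)} be the linear functional with u_0^{(α+1)}(P_k(·;α+1)) = δ_{0,k} for all k. Then for every polynomial f ∈ ℂ[x], u_0^{(α)}( x·f(x) ) = (α² / (2α+1)) u_0^{(α+1)}( f ). -/

import Mathlib

open Polynomial

/-- The polynomials `p_n(x; α)` defined recursively by
`p_0 = 1`, `p_{n+1} = x² p_n'' − x(2x − 1 − 2α) p_n' − ((2α+1)x − α²) p_n`. -/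
noncomputable def pseq (α : ℂ) : ℕ → ℂ[X]
  | 0 => 1
  | n + 1 =>
      X ^ 2 * derivative (derivative (pseq α n))
        - X * (2 * X - C (1 + 2 * α)) * derivative (pseq α n)
        - (C (2 * α + 1) * X - C (α ^ 2)) * pseq α n

/-- The monic normalization `P_n(x;α) = p_n(x;α) / ((−2)ⁿ (α+1/2)_n)`. -/
noncomputable def Pmonic (α : ℂ) (n : ℕ) : ℂ[X] :=
  ((-2 : ℂ) ^ n * (ascPochhammer ℂ n).eval (α + 1 / 2))⁻¹ • pseq α n

/-! The operator of the recursion intertwines with multiplication by `X`: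
`recOp α (X * q) = X * recOp (α + 1) q`. By induction this gives the contiguity relation
`(2α + 1) x p_n(x; α + 1) = α² p_n(x; α) − p_{n+1}(x; α)`. As `u_0^{(α)}` is `1` on `p_0 = 1` and
kills every `p_k(·; α)` with `k ≥ 1`, both sides of the claim agree on the polynomials
`p_n(·; α + 1)`, which form a basis since `p_n` has degree `n` and leading coefficient
`(−2)ⁿ (α + 1/2)_n ≠ 0`. -/

noncomputable def recOp (α : ℂ) : ℂ[X] →ₗ[ℂ] ℂ[X] :=
  LinearMap.mulLeft ℂ (X ^ 2) ∘ₗ derivative ∘ₗ derivative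
    - LinearMap.mulLeft ℂ (X * (2 * X - C (1 + 2 * α))) ∘ₗ derivative
    - LinearMap.mulLeft ℂ (C (2 * α + 1) * X - C (α ^ 2))

lemma pseq_succ (α : ℂ) (n : ℕ) : pseq α (n + 1) = recOp α (pseq α n) := rfl

lemma recOp_X_mul (α : ℂ) (q : ℂ[X]) : recOp α (X * q) = X * recOp (α + 1) q := by
  simp only [recOp, LinearMap.sub_apply, LinearMap.comp_apply, LinearMap.mulLeft_apply,
    derivative_mul, derivative_X, one_mul, derivative_add, C_add, C_mul, C_pow, C_1, C_ofNat]
  ring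

lemma coeff_recOp_succ (α : ℂ) (p : ℂ[X]) (k : ℕ) :
    (recOp α p).coeff (k + 1)
      = (α + k + 1) ^ 2 * p.coeff (k + 1) - (2 * α + 2 * k + 1) * p.coeff k := by
  have hexpand : recOp α p = X * (X * derivative (derivative p)) - 2 * (X * (X * derivative p))
      + C (1 + 2 * α) * (X * derivative p) - C (2 * α + 1) * (X * p) + C (α ^ 2) * p := by
    simp only [recOp, LinearMap.sub_apply, LinearMap.comp_apply, LinearMap.mulLeft_apply]
    ring
  rw [hexpand]
  rcases k with _ | k <;>
  · simp only [coeff_add, coeff_sub, coeff_C_mul, coeff_ofNat_mul, coeff_X_mul, coeff_X_mul_zero,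
      coeff_derivative]
    push_cast
    ring

lemma smul_X_mul_pseq (α : ℂ) (n : ℕ) :
    (2 * α + 1) • (X * pseq (α + 1) n) = α ^ 2 • pseq α n - pseq α (n + 1) := by
  induction n with
  | zero =>
    simp only [pseq, derivative_one, map_zero, smul_eq_C_mul]
    ring
  | succ n ih =>
    rw [pseq_succ (α + 1), ← recOp_X_mul, ← map_smul, ih, map_sub, map_smul, ← pseq_succ,
      ← pseq_succ]

noncomputable def pseqLead (α : ℂ) (n : ℕ) : ℂ :=
  (-2 : ℂ) ^ n * (ascPochhammer ℂ n).eval (α + 1 / 2)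

lemma pseqLead_succ (α : ℂ) (n : ℕ) :
    pseqLead α (n + 1) = -(2 * α + 2 * n + 1) * pseqLead α n := by
  simp only [pseqLead, ascPochhammer_succ_eval, pow_succ]
  ring

lemma pseqLead_ne_zero {α : ℂ} (hα : -(1 / 2 : ℝ) < α.re) (n : ℕ) : pseqLead α n ≠ 0 := by
  refine mul_ne_zero (pow_ne_zero _ (by norm_num)) ?_
  rw [Ne, ascPochhammer_eval_eq_zero_iff]
  rintro ⟨k, -, hk⟩
  have hre := congrArg Complex.re hk
  simp only [Complex.natCast_re, Complex.neg_re, Complex.add_re] at hre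
  norm_num at hre
  linarith [k.cast_nonneg (α := ℝ)]

lemma coeff_pseq_of_lt (α : ℂ) {n k : ℕ} (h : n < k) : (pseq α n).coeff k = 0 := by
  induction n generalizing k with
  | zero => simp [pseq, coeff_one, h.ne']
  | succ n ih =>
    obtain ⟨j, rfl⟩ : ∃ j, k = j + 1 := ⟨k - 1, by omega⟩
    rw [pseq_succ, coeff_recOp_succ, ih (by omega), ih (by omega), mul_zero, mul_zero, sub_zero]

lemma coeff_pseq_self (α : ℂ) (n : ℕ) : (pseq α n).coeff n = pseqLead α n := by
  induction n with
  | zero => simp [pseq, pseqLead]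
  | succ n ih =>
    rw [pseq_succ, coeff_recOp_succ, coeff_pseq_of_lt α (lt_add_one n), ih, pseqLead_succ]
    ring

lemma degree_pseq {α : ℂ} {n : ℕ} (h : pseqLead α n ≠ 0) : (pseq α n).degree = n :=
  degree_eq_of_le_of_coeff_ne_zero
    ((degree_le_iff_coeff_zero _ _).mpr fun _ hm => coeff_pseq_of_lt α (by exact_mod_cast hm))
    (by rwa [coeff_pseq_self])

lemma Polynomial.span_range_eq_top_of_degree_eq {K : Type*} [Field K] {p : ℕ → K[X]}
    (h : ∀ n, (p n).degree = n) : Submodule.span K (Set.range p) = ⊤ :=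
  Sequence.span (S := ⟨p, h⟩) fun n => (leadingCoeff_ne_zero.mpr (Sequence.ne_zero _ n)).isUnit

lemma span_range_pseq {α : ℂ} (hα : -(1 / 2 : ℝ) < α.re) :
    Submodule.span ℂ (Set.range (pseq α)) = ⊤ :=
  span_range_eq_top_of_degree_eq fun n => degree_pseq (pseqLead_ne_zero hα n)

lemma pseq_eq_smul_Pmonic {α : ℂ} {n : ℕ} (h : pseqLead α n ≠ 0) :
    pseq α n = pseqLead α n • Pmonic α n := by
  rw [Pmonic, ← pseqLead, smul_smul, mul_inv_cancel₀ h, one_smul]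

lemma apply_pseq_of_apply_Pmonic {α : ℂ} (hα : -(1 / 2 : ℝ) < α.re) {u : ℂ[X] →ₗ[ℂ] ℂ}
    (hu : ∀ k, u (Pmonic α k) = if k = 0 then 1 else 0) (k : ℕ) :
    u (pseq α k) = if k = 0 then 1 else 0 := by
  rw [pseq_eq_smul_Pmonic (pseqLead_ne_zero hα k), map_smul, hu, smul_eq_mul]
  split_ifs with hk
  · simp [hk, pseqLead]
  · exact mul_zero _

theorem stmt17 (α : ℂ) (hα : -(1 / 2 : ℝ) < α.re)
    (u0α : ℂ[X] →ₗ[ℂ] ℂ) (hu0α : ∀ k : ℕ, u0α (Pmonic α k) = if k = 0 then 1 else 0)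
    (u0α1 : ℂ[X] →ₗ[ℂ] ℂ)
    (hu0α1 : ∀ k : ℕ, u0α1 (Pmonic (α + 1) k) = if k = 0 then 1 else 0) :
    ∀ f : ℂ[X], u0α (X * f) = α ^ 2 / (2 * α + 1) * u0α1 f := by
  have h2α : 2 * α + 1 ≠ 0 := fun h => by
    have hre := congrArg Complex.re h
    norm_num at hre
    linarith
  have hα1 : -(1 / 2 : ℝ) < (α + 1).re := by
    rw [Complex.add_re, Complex.one_re]
    linarith
  have hagree : (2 * α + 1) • u0α ∘ₗ LinearMap.mulLeft ℂ X = α ^ 2 • u0α1 := by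
    refine LinearMap.ext_on (span_range_pseq hα1) ?_
    rintro _ ⟨n, rfl⟩
    have h := congrArg u0α (smul_X_mul_pseq α n)
    simp only [map_smul, map_sub, apply_pseq_of_apply_Pmonic hα hu0α, smul_eq_mul] at h
    simp only [LinearMap.smul_apply, LinearMap.comp_apply, LinearMap.mulLeft_apply, smul_eq_mul, h,
      apply_pseq_of_apply_Pmonic hα1 hu0α1]
    simp
  intro f
  have h := LinearMap.congr_fun hagree f
  simp only [LinearMap.smul_apply, LinearMap.comp_apply, LinearMap.mulLeft_apply, smul_eq_mul] at h
  rw [div_mul_eq_mul_div, eq_div_iff h2α, mul_comm, h]
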